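/- Let 1 < p₁, q < ∞, p₁' < p₂ < ∞ with 1/q = 1/p₁ + 1/p₂, let −1/q_avg < λ < 0 (i.e., −1/q < λ < 0 in the unmixed case), 0 ≤ λ₂ < 1/n, and λ = λ₁ + λ₂. If b ∈ CBMO^{p₂,λ₂}(ℝⁿ), then the commutator 𝓗_b is bounded from the central Morrey space 𝓑^{p₁,λ₁}(ℝⁿ) to 𝓑^{q,λ}(ℝⁿ): ‖𝓗_b f‖_{𝓑^{q,λ}} ≤ C ‖b‖_{CBMO^{p₂,λ₂}} ‖f‖_{𝓑^{p₁,λ₁}}. -/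

import Mathlib

open MeasureTheory Metric ENNReal
open Set

set_option maxHeartbeats 1600000
noncomputable section

/-- The average of `b` over the ball `B(0,r)` in `ℝⁿ`. -/
def ballAvg (n : ℕ) (b : EuclideanSpace ℝ (Fin n) → ℝ) (r : ℝ) : ℝ :=
  ⨍ x in ball (0 : EuclideanSpace ℝ (Fin n)) r, b x

/-- The `L^q(ℝⁿ)` norm of `g` restricted (by indicator) to a set `s`. -/
def indNorm (n : ℕ) (q : ℝ) (s : Set (EuclideanSpace ℝ (Fin n)))
    (g : EuclideanSpace ℝ (Fin n) → ℝ) : ℝ≥0∞ :=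
  eLpNorm (s.indicator g) (ENNReal.ofReal q) volume

/-- `b ∈ CBMO^{q,λ}(ℝⁿ)` with norm at most `N`: for every `r > 0`,
`‖(b - b_{B(0,r)}) χ_{B(0,r)}‖_{L^q} ≤ N |B(0,r)|^λ ‖χ_{B(0,r)}‖_{L^q}`. -/
def CBMOLe (n : ℕ) (q lam N : ℝ) (b : EuclideanSpace ℝ (Fin n) → ℝ) : Prop :=
  ∀ r > 0,
    indNorm n q (ball 0 r) (fun x => b x - ballAvg n b r) ≤
      ENNReal.ofReal ((volume (ball (0 : EuclideanSpace ℝ (Fin n)) r)).toReal ^ lam * N) *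
        indNorm n q (ball 0 r) 1

/-- `f ∈ 𝓑^{q,λ}(ℝⁿ)` (central Morrey) with norm at most `N`: for every `r > 0`,
`‖f χ_{B(0,r)}‖_{L^q} ≤ N |B(0,r)|^λ ‖χ_{B(0,r)}‖_{L^q}`. -/
def MorreyLe (n : ℕ) (q lam N : ℝ) (f : EuclideanSpace ℝ (Fin n) → ℝ) : Prop :=
  ∀ r > 0,
    indNorm n q (ball 0 r) f ≤
      ENNReal.ofReal ((volume (ball (0 : EuclideanSpace ℝ (Fin n)) r)).toReal ^ lam * N) *
        indNorm n q (ball 0 r) 1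

/-- The `n`-dimensional Hardy operator. -/
def nHardy (n : ℕ) (f : EuclideanSpace ℝ (Fin n) → ℝ) (x : EuclideanSpace ℝ (Fin n)) : ℝ :=
  (‖x‖ ^ n)⁻¹ * ∫ t in ball (0 : EuclideanSpace ℝ (Fin n)) ‖x‖, f t

/-- The commutator `𝓗_b f = b 𝓗 f - 𝓗(b f)`. -/
def hardyComm (n : ℕ) (b f : EuclideanSpace ℝ (Fin n) → ℝ) (x : EuclideanSpace ℝ (Fin n)) : ℝ :=
  b x * nHardy n f x - nHardy n (fun y => b y * f y) x



namespace HardyCommutatorAux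

variable {n : ℕ}

local notation "En" => EuclideanSpace ℝ (Fin n)

lemma vol_zero_singleton (hn : 0 < n) : volume ({0} : Set En) = 0 := by
  haveI : Nonempty (Fin n) := ⟨⟨0, hn⟩⟩
  haveI : Nontrivial En := inferInstance
  exact measure_singleton 0

lemma div_two_pow_rpow {x : ℝ} (hx : 0 < x) (c : ℝ) :
    ∀ j : ℕ, (x / 2 ^ j) ^ c = x ^ c * ((2 : ℝ) ^ (-c)) ^ j
  | 0 => by simp
  | j + 1 => by
    have h1 : x / 2 ^ (j + 1) = (x / 2 ^ j) / 2 := by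
      rw [pow_succ]; ring
    rw [h1, Real.div_rpow (by positivity) (by norm_num : (0:ℝ) ≤ 2),
      div_two_pow_rpow hx c j, pow_succ, Real.rpow_neg (by norm_num : (0:ℝ) ≤ 2)]
    field_simp

lemma annulus_real_id {α s : ℝ} (hs : 0 < s) (j : ℕ) :
    (s / 2 ^ (j + 1)) ^ (-α) * (s / 2 ^ j) ^ (n : ℕ) =
      ((2 : ℝ) ^ α * s ^ ((n : ℝ) - α)) * ((2 : ℝ) ^ (α - (n : ℝ))) ^ j := by
  have hsj : (0 : ℝ) < s / 2 ^ j := by positivity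
  have h1 : s / 2 ^ (j + 1) = (s / 2 ^ j) / 2 := by rw [pow_succ]; ring
  have h2 : ((s / 2 ^ j) : ℝ) ^ (n : ℕ) = (s / 2 ^ j) ^ ((n : ℕ) : ℝ) :=
    (Real.rpow_natCast _ n).symm
  have e1 : (s / 2 ^ (j + 1)) ^ (-α) = (s / 2 ^ j) ^ (-α) * (2 : ℝ) ^ α := by
    rw [h1, Real.div_rpow hsj.le (by norm_num : (0:ℝ) ≤ 2),
      Real.rpow_neg (by norm_num : (0:ℝ) ≤ 2) α, div_eq_mul_inv, inv_inv]
  rw [e1, h2]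
  calc (s / 2 ^ j) ^ (-α) * (2:ℝ) ^ α * (s / 2 ^ j) ^ ((n:ℕ) : ℝ)
      = (2:ℝ) ^ α * ((s / 2 ^ j) ^ (-α) * (s / 2 ^ j) ^ ((n:ℝ))) := by ring
    _ = (2:ℝ) ^ α * (s / 2 ^ j) ^ ((n:ℝ) - α) := by
        rw [← Real.rpow_add hsj]; ring_nf
    _ = (2:ℝ) ^ α * (s ^ ((n:ℝ) - α) * ((2:ℝ) ^ (-((n:ℝ) - α))) ^ j) := by
        rw [div_two_pow_rpow hs]
    _ = ((2 : ℝ) ^ α * s ^ ((n : ℝ) - α)) * ((2 : ℝ) ^ (α - (n : ℝ))) ^ j := by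
        rw [neg_sub]; ring

lemma lintegral_ball_rpow_neg (hn : 0 < n) {α : ℝ} (h0 : 0 < α) (hαn : α < n) :
    ∃ C : ℝ≥0∞, C ≠ ∞ ∧ ∀ s : ℝ, 0 < s →
      ∫⁻ t in ball (0 : En) s, (ENNReal.ofReal ‖t‖) ^ (-α) ∂volume ≤
        C * ENNReal.ofReal (s ^ ((n : ℝ) - α)) := by
  set V1 := volume (ball (0 : En) 1) with hV1
  have hV1fin : V1 ≠ ∞ := measure_ball_lt_top.ne
  set ρ : ℝ≥0∞ := ENNReal.ofReal ((2 : ℝ) ^ (α - (n : ℝ))) with hρ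
  have hρ1 : ρ < 1 := by
    rw [hρ, ← ENNReal.ofReal_one]
    exact (ENNReal.ofReal_lt_ofReal_iff one_pos).2
      (Real.rpow_lt_one_of_one_lt_of_neg one_lt_two (by linarith))
  refine ⟨ENNReal.ofReal ((2:ℝ) ^ α) * V1 * (1 - ρ)⁻¹,
    ENNReal.mul_ne_top (ENNReal.mul_ne_top ofReal_ne_top hV1fin)
      (ENNReal.inv_ne_top.2 (tsub_pos_of_lt hρ1).ne'), ?_⟩
  intro s hs
  set A : ℕ → Set En := fun j => ball (0 : En) (s / 2 ^ j) \ ball (0 : En) (s / 2 ^ (j + 1))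
    with hA
  have hAmeas : ∀ j, MeasurableSet (A j) := fun j =>
    measurableSet_ball.diff measurableSet_ball
  have hcover : ball (0 : En) s \ {0} ⊆ ⋃ j, A j := by
    rintro x ⟨hx, hx0⟩
    have hxn : 0 < ‖x‖ := norm_pos_iff.2 (by simpa using hx0)
    have hxs : ‖x‖ < s := mem_ball_zero_iff.1 hx
    have hex : ∃ k, s / 2 ^ k ≤ ‖x‖ := by
      obtain ⟨k, hk⟩ := pow_unbounded_of_one_lt (s / ‖x‖) (one_lt_two (α := ℝ))
      refine ⟨k, ?_⟩
      rw [div_le_iff₀ (by positivity)]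
      rw [div_lt_iff₀ hxn] at hk
      nlinarith [pow_pos (zero_lt_two (α := ℝ)) k]
    classical
    have hk₀ : s / 2 ^ (Nat.find hex) ≤ ‖x‖ := Nat.find_spec hex
    have hk₀pos : Nat.find hex ≠ 0 := by
      intro h
      rw [h] at hk₀
      simp at hk₀
      linarith
    obtain ⟨j, hjk⟩ := Nat.exists_eq_succ_of_ne_zero hk₀pos
    rw [hjk] at hk₀
    have hj : ¬ (s / 2 ^ j ≤ ‖x‖) := Nat.find_min hex (by rw [hjk]; exact Nat.lt_succ_self j)
    exact mem_iUnion.2 ⟨j, mem_ball_zero_iff.2 (not_le.1 hj),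
      fun hmem => absurd hk₀ (not_le.2 (mem_ball_zero_iff.1 hmem))⟩
  have hdiff : (ball (0 : En) s \ {0} : Set En) =ᵐ[volume] ball (0 : En) s :=
    diff_ae_eq_self.2 (measure_mono_null inter_subset_right (vol_zero_singleton hn))
  calc ∫⁻ t in ball (0 : En) s, (ENNReal.ofReal ‖t‖) ^ (-α) ∂volume
      = ∫⁻ t in ball (0 : En) s \ {0}, (ENNReal.ofReal ‖t‖) ^ (-α) ∂volume :=
        (setLIntegral_congr hdiff).symm
    _ ≤ ∫⁻ t in ⋃ j, A j, (ENNReal.ofReal ‖t‖) ^ (-α) ∂volume :=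
        lintegral_mono_set hcover
    _ ≤ ∑' j, ∫⁻ t in A j, (ENNReal.ofReal ‖t‖) ^ (-α) ∂volume :=
        lintegral_iUnion_le _ _
    _ ≤ ∑' j, (ENNReal.ofReal ((2:ℝ) ^ α * s ^ ((n:ℝ) - α)) * V1) * ρ ^ j := by
        refine ENNReal.tsum_le_tsum fun j => ?_
        have hsj1 : (0:ℝ) < s / 2 ^ (j + 1) := by positivity
        have hpt : ∀ t ∈ A j, (ENNReal.ofReal ‖t‖) ^ (-α) ≤
            ENNReal.ofReal ((s / 2 ^ (j + 1)) ^ (-α)) := by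
          intro t ht
          have h1 : s / 2 ^ (j + 1) ≤ ‖t‖ := not_lt.1 (fun h =>
            ht.2 (mem_ball_zero_iff.2 h))
          rw [ENNReal.ofReal_rpow_of_pos (lt_of_lt_of_le hsj1 h1)]
          exact ENNReal.ofReal_le_ofReal
            (Real.rpow_le_rpow_of_nonpos hsj1 h1 (by linarith))
        calc ∫⁻ t in A j, (ENNReal.ofReal ‖t‖) ^ (-α) ∂volume
            ≤ ∫⁻ _ in A j, ENNReal.ofReal ((s / 2 ^ (j+1)) ^ (-α)) ∂volume :=
              setLIntegral_mono' (hAmeas j) hpt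
          _ = ENNReal.ofReal ((s / 2 ^ (j+1)) ^ (-α)) * volume (A j) :=
              setLIntegral_const _ _
          _ ≤ ENNReal.ofReal ((s / 2 ^ (j+1)) ^ (-α)) * volume (ball (0:En) (s / 2 ^ j)) :=
              mul_le_mul_right (measure_mono diff_subset) _
          _ = (ENNReal.ofReal ((2:ℝ) ^ α * s ^ ((n:ℝ) - α)) * V1) * ρ ^ j := by
              rw [Measure.addHaar_ball_of_pos _ _ (by positivity : (0:ℝ) < s / 2 ^ j),
                finrank_euclideanSpace_fin, ← mul_assoc, hρ,
                ← ENNReal.ofReal_pow (by positivity), ← ENNReal.ofReal_mul (by positivity),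
                annulus_real_id hs j, ENNReal.ofReal_mul (by positivity)]
              ring
    _ = (ENNReal.ofReal ((2:ℝ) ^ α) * V1 * (1 - ρ)⁻¹) * ENNReal.ofReal (s ^ ((n:ℝ) - α)) := by
        rw [ENNReal.tsum_mul_left, ENNReal.tsum_geometric,
          ENNReal.ofReal_mul (by positivity)]
        ring


lemma mul_two_pow_rpow {x : ℝ} (hx : 0 < x) (c : ℝ) :
    ∀ j : ℕ, (x * 2 ^ j) ^ c = x ^ c * ((2 : ℝ) ^ c) ^ j
  | 0 => by simp
  | j + 1 => by
    have h1 : x * 2 ^ (j + 1) = (x * 2 ^ j) * 2 := by rw [pow_succ]; ring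
    rw [h1, Real.mul_rpow (by positivity) (by norm_num : (0:ℝ) ≤ 2),
      mul_two_pow_rpow hx c j, pow_succ]
    ring

lemma annulus_real_id' {γ s : ℝ} (hs : 0 < s) (j : ℕ) :
    (s * 2 ^ j) ^ (-γ) * (s * 2 ^ (j + 1)) ^ (n : ℕ) =
      ((2 : ℝ) ^ ((n : ℕ) : ℝ) * s ^ ((n : ℝ) - γ)) * ((2 : ℝ) ^ ((n : ℝ) - γ)) ^ j := by
  have hsj : (0 : ℝ) < s * 2 ^ j := by positivity
  have h2 : ((s * 2 ^ (j + 1)) : ℝ) ^ (n : ℕ) = (s * 2 ^ (j + 1)) ^ ((n : ℕ) : ℝ) :=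
    (Real.rpow_natCast _ n).symm
  have h1 : s * 2 ^ (j + 1) = (s * 2 ^ j) * 2 := by rw [pow_succ]; ring
  have e1 : (s * 2 ^ (j + 1)) ^ ((n : ℕ) : ℝ) =
      (s * 2 ^ j) ^ ((n : ℝ)) * (2 : ℝ) ^ ((n : ℝ)) := by
    rw [h1, Real.mul_rpow hsj.le (by norm_num : (0:ℝ) ≤ 2)]
  rw [h2, e1]
  calc (s * 2 ^ j) ^ (-γ) * ((s * 2 ^ j) ^ ((n:ℝ)) * (2:ℝ) ^ ((n:ℝ)))
      = (2:ℝ) ^ ((n:ℝ)) * ((s * 2 ^ j) ^ (-γ) * (s * 2 ^ j) ^ ((n:ℝ))) := by ring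
    _ = (2:ℝ) ^ ((n:ℝ)) * (s * 2 ^ j) ^ ((n:ℝ) - γ) := by
        rw [← Real.rpow_add hsj]; ring_nf
    _ = (2:ℝ) ^ ((n:ℝ)) * (s ^ ((n:ℝ) - γ) * ((2:ℝ) ^ ((n:ℝ) - γ)) ^ j) := by
        rw [mul_two_pow_rpow hs]
    _ = _ := by ring

lemma lintegral_compl_ball_rpow_neg (hn : 0 < n) {γ : ℝ} (hγ : (n : ℝ) < γ) :
    ∃ C : ℝ≥0∞, C ≠ ∞ ∧ ∀ s : ℝ, 0 < s →
      ∫⁻ x in {x : En | s ≤ ‖x‖}, (ENNReal.ofReal ‖x‖) ^ (-γ) ∂volume ≤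
        C * ENNReal.ofReal (s ^ ((n : ℝ) - γ)) := by
  set V1 := volume (ball (0 : En) 1) with hV1
  have hV1fin : V1 ≠ ∞ := measure_ball_lt_top.ne
  set ρ : ℝ≥0∞ := ENNReal.ofReal ((2 : ℝ) ^ ((n : ℝ) - γ)) with hρ
  have hρ1 : ρ < 1 := by
    rw [hρ, ← ENNReal.ofReal_one]
    exact (ENNReal.ofReal_lt_ofReal_iff one_pos).2
      (Real.rpow_lt_one_of_one_lt_of_neg one_lt_two (by linarith))
  refine ⟨ENNReal.ofReal ((2:ℝ) ^ ((n : ℕ) : ℝ)) * V1 * (1 - ρ)⁻¹,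
    ENNReal.mul_ne_top (ENNReal.mul_ne_top ofReal_ne_top hV1fin)
      (ENNReal.inv_ne_top.2 (tsub_pos_of_lt hρ1).ne'), ?_⟩
  intro s hs
  set A : ℕ → Set En := fun j => ball (0 : En) (s * 2 ^ (j + 1)) \ ball (0 : En) (s * 2 ^ j)
    with hA
  have hAmeas : ∀ j, MeasurableSet (A j) := fun j =>
    measurableSet_ball.diff measurableSet_ball
  have hcover : {x : En | s ≤ ‖x‖} ⊆ ⋃ j, A j := by
    intro x hx
    have hxs : s ≤ ‖x‖ := hx
    have hex : ∃ k, ‖x‖ < s * 2 ^ k := by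
      obtain ⟨k, hk⟩ := pow_unbounded_of_one_lt (‖x‖ / s) (one_lt_two (α := ℝ))
      exact ⟨k, by rw [div_lt_iff₀ hs] at hk; nlinarith⟩
    classical
    have hk₀ : ‖x‖ < s * 2 ^ (Nat.find hex) := Nat.find_spec hex
    have hk₀pos : Nat.find hex ≠ 0 := by
      intro h
      rw [h] at hk₀
      simp at hk₀
      linarith
    obtain ⟨j, hjk⟩ := Nat.exists_eq_succ_of_ne_zero hk₀pos
    rw [hjk] at hk₀
    have hj : ¬ (‖x‖ < s * 2 ^ j) := Nat.find_min hex (by rw [hjk]; exact Nat.lt_succ_self j)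
    exact mem_iUnion.2 ⟨j, mem_ball_zero_iff.2 hk₀,
      fun hmem => hj (mem_ball_zero_iff.1 hmem)⟩
  calc ∫⁻ x in {x : En | s ≤ ‖x‖}, (ENNReal.ofReal ‖x‖) ^ (-γ) ∂volume
      ≤ ∫⁻ x in ⋃ j, A j, (ENNReal.ofReal ‖x‖) ^ (-γ) ∂volume :=
        lintegral_mono_set hcover
    _ ≤ ∑' j, ∫⁻ x in A j, (ENNReal.ofReal ‖x‖) ^ (-γ) ∂volume :=
        lintegral_iUnion_le _ _
    _ ≤ ∑' j, (ENNReal.ofReal ((2:ℝ) ^ ((n : ℕ) : ℝ) * s ^ ((n:ℝ) - γ)) * V1) * ρ ^ j := by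
        refine ENNReal.tsum_le_tsum fun j => ?_
        have hsj : (0:ℝ) < s * 2 ^ j := by positivity
        have hpt : ∀ x ∈ A j, (ENNReal.ofReal ‖x‖) ^ (-γ) ≤
            ENNReal.ofReal ((s * 2 ^ j) ^ (-γ)) := by
          intro x hx
          have h1 : s * 2 ^ j ≤ ‖x‖ := not_lt.1 (fun h => hx.2 (mem_ball_zero_iff.2 h))
          rw [ENNReal.ofReal_rpow_of_pos (lt_of_lt_of_le hsj h1)]
          exact ENNReal.ofReal_le_ofReal
            (Real.rpow_le_rpow_of_nonpos hsj h1 (by linarith))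
        calc ∫⁻ x in A j, (ENNReal.ofReal ‖x‖) ^ (-γ) ∂volume
            ≤ ∫⁻ _ in A j, ENNReal.ofReal ((s * 2 ^ j) ^ (-γ)) ∂volume :=
              setLIntegral_mono' (hAmeas j) hpt
          _ = ENNReal.ofReal ((s * 2 ^ j) ^ (-γ)) * volume (A j) :=
              setLIntegral_const _ _
          _ ≤ ENNReal.ofReal ((s * 2 ^ j) ^ (-γ)) * volume (ball (0:En) (s * 2 ^ (j+1))) :=
              mul_le_mul_right (measure_mono diff_subset) _
          _ = (ENNReal.ofReal ((2:ℝ) ^ ((n : ℕ) : ℝ) * s ^ ((n:ℝ) - γ)) * V1) * ρ ^ j := by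
              rw [Measure.addHaar_ball_of_pos _ _ (by positivity : (0:ℝ) < s * 2 ^ (j+1)),
                finrank_euclideanSpace_fin, ← mul_assoc, hρ,
                ← ENNReal.ofReal_pow (by positivity), ← ENNReal.ofReal_mul (by positivity),
                annulus_real_id' hs j, ENNReal.ofReal_mul (by positivity)]
              ring
    _ = (ENNReal.ofReal ((2:ℝ) ^ ((n : ℕ) : ℝ)) * V1 * (1 - ρ)⁻¹) *
          ENNReal.ofReal (s ^ ((n:ℝ) - γ)) := by
        rw [ENNReal.tsum_mul_left, ENNReal.tsum_geometric,
          ENNReal.ofReal_mul (by positivity)]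
        ring


lemma measurable_nHardy (g : En → ℝ) (hg : Integrable g volume) :
    Measurable (nHardy n g) := by
  have hgp : Integrable (fun t : En => max (g t) 0) volume := hg.pos_part
  have hgm : Integrable (fun t : En => max (-g t) 0) volume := hg.neg.pos_part
  set Fp : ℝ → ℝ := fun s => ∫ t in ball (0 : En) s, max (g t) 0 with hFp
  set Fm : ℝ → ℝ := fun s => ∫ t in ball (0 : En) s, max (-g t) 0 with hFm
  have hFpm : Monotone Fp := fun s₁ s₂ h12 =>
    setIntegral_mono_set hgp.integrableOn
      (Filter.Eventually.of_forall fun t => le_max_right _ _)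
      (HasSubset.Subset.eventuallyLE (ball_subset_ball h12))
  have hFmm : Monotone Fm := fun s₁ s₂ h12 =>
    setIntegral_mono_set hgm.integrableOn
      (Filter.Eventually.of_forall fun t => le_max_right _ _)
      (HasSubset.Subset.eventuallyLE (ball_subset_ball h12))
  have key : nHardy n g = fun x => (‖x‖ ^ n)⁻¹ * (Fp ‖x‖ - Fm ‖x‖) := by
    funext x
    show (‖x‖ ^ n)⁻¹ * ∫ t in ball (0 : En) ‖x‖, g t = _
    congr 1
    rw [hFp, hFm, ← integral_sub hgp.integrableOn hgm.integrableOn]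
    exact integral_congr_ae (Filter.Eventually.of_forall fun t =>
      (max_zero_sub_max_neg_zero_eq_self (g t)).symm)
  rw [key]
  exact ((measurable_norm.pow_const n).inv).mul
    ((hFpm.measurable.comp measurable_norm).sub (hFmm.measurable.comp measurable_norm))

lemma hardy_lintegral (hn : 0 < n) {p : ℝ} (hp : 1 < p) :
    ∃ C : ℝ≥0∞, C ≠ ∞ ∧ ∀ g : En → ℝ, Measurable g →
      ∫⁻ x : En, (ENNReal.ofReal ((‖x‖ ^ n)⁻¹) *
          ∫⁻ t in ball (0 : En) ‖x‖, (‖g t‖₊ : ℝ≥0∞) ∂volume) ^ p ∂volume ≤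
        C * ∫⁻ t : En, (‖g t‖₊ : ℝ≥0∞) ^ p ∂volume := by
  have hp0 : 0 < p := one_pos.trans hp
  have hp10 : p - 1 ≠ 0 := ne_of_gt (by linarith)
  set p' : ℝ := Real.conjExponent p with hp'def
  have hconj : p.HolderConjugate p' := Real.HolderConjugate.conjExponent hp
  have hp'1 : 1 < p' := hconj.symm.lt
  have hp'0 : 0 < p' := lt_trans one_pos hp'1
  have hp'eq : p' = p / (p - 1) := rfl
  have hnpos : (0:ℝ) < n := Nat.cast_pos.2 hn
  set a : ℝ := n / p' with ha
  have h0a : 0 < a := div_pos hnpos hp'0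
  have hnp0 : (0:ℝ) < (n:ℝ)/p := div_pos hnpos hp0
  have hnpn : (n:ℝ)/p < n := div_lt_self hnpos hp
  set γ : ℝ := (n : ℝ) + a with hγdef
  obtain ⟨CB, hCBne, hCB⟩ := lintegral_ball_rpow_neg hn hnp0 hnpn
  obtain ⟨CA, hCAne, hCA⟩ := lintegral_compl_ball_rpow_neg hn
    (show (n:ℝ) < γ by rw [hγdef]; linarith)
  have hK1ne : CB ^ (p/p') ≠ ∞ := ENNReal.rpow_ne_top_of_nonneg (by positivity) hCBne
  refine ⟨CB ^ (p/p') * CA, ENNReal.mul_ne_top hK1ne hCAne, ?_⟩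
  intro g hg
  set F : En → ℝ≥0∞ := fun t => (‖g t‖₊ : ℝ≥0∞) with hF
  have hFmeas : Measurable F := hg.nnnorm.coe_nnreal_ennreal
  set Ψ : En → ℝ≥0∞ := fun t => F t ^ p * (ENNReal.ofReal ‖t‖) ^ a with hΨ
  have hΨmeas : Measurable Ψ :=
    (ENNReal.continuous_rpow_const.measurable.comp hFmeas).mul
      (ENNReal.continuous_rpow_const.measurable.comp measurable_norm.ennreal_ofReal)
  have hae0 : ∀ᵐ t : En ∂volume, t ≠ 0 := by
    have h := vol_zero_singleton hn
    rw [ae_iff]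
    simpa [not_not, Set.setOf_eq_eq_singleton] using h
  -- Step 1 : pointwise Schur bound
  have step1 : ∀ x : En,
      (ENNReal.ofReal ((‖x‖ ^ n)⁻¹) *
          ∫⁻ t in ball (0 : En) ‖x‖, F t ∂volume) ^ p ≤
        CB ^ (p/p') * ((ENNReal.ofReal ‖x‖) ^ (-γ) *
          ∫⁻ t in ball (0 : En) ‖x‖, Ψ t ∂volume) := by
    intro x
    rcases eq_or_lt_of_le (norm_nonneg x) with hx0 | hx0
    · have hb : ball (0 : En) ‖x‖ = ∅ := ball_eq_empty.2 hx0.ge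
      rw [hb, Measure.restrict_empty, lintegral_zero_measure, mul_zero,
        ENNReal.zero_rpow_of_pos hp0]
      exact zero_le
    · set s := ‖x‖ with hs
      set u : En → ℝ≥0∞ := fun t => (ENNReal.ofReal ‖t‖) ^ (a / p) with hu
      have humeas : Measurable u :=
        ENNReal.continuous_rpow_const.measurable.comp measurable_norm.ennreal_ofReal
      have hae : ∀ᵐ t ∂(volume.restrict (ball (0 : En) s)),
          F t = ((F * u) * u⁻¹) t := by
        filter_upwards [ae_restrict_of_ae hae0] with t ht
        have hto : 0 < ‖t‖ := norm_pos_iff.2 ht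
        have hu0 : u t ≠ 0 :=
          (ENNReal.rpow_pos (ENNReal.ofReal_pos.2 hto) ofReal_ne_top).ne'
        have hut : u t ≠ ∞ := ENNReal.rpow_ne_top_of_nonneg (by positivity) ofReal_ne_top
        simp only [Pi.mul_apply, Pi.inv_apply]
        rw [mul_assoc, ENNReal.mul_inv_cancel hu0 hut, mul_one]
      have hhold := ENNReal.lintegral_mul_le_Lp_mul_Lq
        (volume.restrict (ball (0 : En) s)) hconj
        ((hFmeas.mul humeas).aemeasurable) ((humeas.inv).aemeasurable)
      have e1 : ∀ t : En, ((F * u) t) ^ p = Ψ t := by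
        intro t
        simp only [Pi.mul_apply, hΨ]
        rw [ENNReal.mul_rpow_of_nonneg _ _ hp0.le, hu, ← ENNReal.rpow_mul,
          div_mul_cancel₀ _ hp0.ne']
      have e2 : ∀ t : En, ((u⁻¹) t) ^ p' = (ENNReal.ofReal ‖t‖) ^ (-((n:ℝ)/p)) := by
        intro t
        simp only [Pi.inv_apply, hu]
        rw [← ENNReal.rpow_neg, ← ENNReal.rpow_mul]
        congr 1
        rw [ha, hp'eq]
        field_simp
      have hL : ∫⁻ t in ball (0 : En) s, F t ∂volume ≤
          (∫⁻ t in ball (0 : En) s, Ψ t ∂volume) ^ (1/p) *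
            (CB * ENNReal.ofReal (s ^ ((n:ℝ) - (n:ℝ)/p))) ^ (1/p') := by
        calc ∫⁻ t in ball (0 : En) s, F t ∂volume
            = ∫⁻ t in ball (0 : En) s, ((F * u) * u⁻¹) t ∂volume :=
              lintegral_congr_ae hae
          _ ≤ (∫⁻ t in ball (0 : En) s, ((F * u) t) ^ p ∂volume) ^ (1/p) *
                (∫⁻ t in ball (0 : En) s, ((u⁻¹) t) ^ p' ∂volume) ^ (1/p') := hhold
          _ = (∫⁻ t in ball (0 : En) s, Ψ t ∂volume) ^ (1/p) *
                (∫⁻ t in ball (0 : En) s,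
                  (ENNReal.ofReal ‖t‖) ^ (-((n:ℝ)/p)) ∂volume) ^ (1/p') := by
              rw [lintegral_congr e1, lintegral_congr e2]
          _ ≤ _ := by
              exact mul_le_mul_right (ENNReal.rpow_le_rpow (hCB s hx0) (by positivity)) _
      have hc0 : ENNReal.ofReal ((s ^ n)⁻¹) = (ENNReal.ofReal s) ^ (-(n:ℝ)) := by
        have h1 : ((s : ℝ) ^ (n : ℕ))⁻¹ = s ^ (-(n:ℝ)) := by
          rw [← Real.rpow_natCast s n, ← Real.rpow_neg hx0.le]
        rw [h1, ENNReal.ofReal_rpow_of_pos hx0]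
      have hone : ENNReal.ofReal s ≠ 0 := (ENNReal.ofReal_pos.2 hx0).ne'
      calc (ENNReal.ofReal ((s ^ n)⁻¹) * ∫⁻ t in ball (0 : En) s, F t ∂volume) ^ p
          ≤ (ENNReal.ofReal ((s ^ n)⁻¹) *
              ((∫⁻ t in ball (0 : En) s, Ψ t ∂volume) ^ (1/p) *
                (CB * ENNReal.ofReal (s ^ ((n:ℝ) - (n:ℝ)/p))) ^ (1/p'))) ^ p :=
            ENNReal.rpow_le_rpow (mul_le_mul_right hL _) hp0.le
        _ = ((ENNReal.ofReal s) ^ (-(n:ℝ))) ^ p *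
              ((∫⁻ t in ball (0 : En) s, Ψ t ∂volume) ^ (1/p)) ^ p *
              ((CB * ENNReal.ofReal (s ^ ((n:ℝ) - (n:ℝ)/p))) ^ (1/p')) ^ p := by
            rw [hc0, ENNReal.mul_rpow_of_nonneg _ _ hp0.le,
              ENNReal.mul_rpow_of_nonneg _ _ hp0.le, mul_assoc]
        _ = CB ^ (p/p') * ((ENNReal.ofReal ‖x‖) ^ (-γ) *
              ∫⁻ t in ball (0 : En) s, Ψ t ∂volume) := by
            have h1 : ((∫⁻ t in ball (0 : En) s, Ψ t ∂volume) ^ (1/p)) ^ p =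
                ∫⁻ t in ball (0 : En) s, Ψ t ∂volume := by
              rw [← ENNReal.rpow_mul, one_div, inv_mul_cancel₀ hp0.ne', ENNReal.rpow_one]
            have h2 : ((CB * ENNReal.ofReal (s ^ ((n:ℝ) - (n:ℝ)/p))) ^ (1/p')) ^ p
                = CB ^ (p/p') *
                  ((ENNReal.ofReal s) ^ (((n:ℝ) - (n:ℝ)/p) * (p/p'))) := by
              rw [← ENNReal.rpow_mul, ENNReal.mul_rpow_of_nonneg _ _ (by positivity),
                ← ENNReal.ofReal_rpow_of_pos hx0, ← ENNReal.rpow_mul]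
              congr 2
              · rw [one_div, division_def]; ring
              · rw [one_div, division_def]; ring
            have h3 : ((ENNReal.ofReal s) ^ (-(n:ℝ))) ^ p *
                ((ENNReal.ofReal s) ^ (((n:ℝ) - (n:ℝ)/p) * (p/p'))) =
                  (ENNReal.ofReal s) ^ (-γ) := by
              rw [← ENNReal.rpow_mul, ← ENNReal.rpow_add _ _ hone ofReal_ne_top]
              congr 1
              rw [hγdef, ha, hp'eq]
              field_simp
              ring
            rw [h1, h2, ← h3]
            ring
  -- Step 2 : Tonelli
  have hset : MeasurableSet {z : En × En | ‖z.2‖ < ‖z.1‖} :=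
    measurableSet_lt (measurable_snd.norm) (measurable_fst.norm)
  set Φ : En × En → ℝ≥0∞ := fun z =>
    ({z : En × En | ‖z.2‖ < ‖z.1‖}.indicator (fun _ => 1) z) *
      ((ENNReal.ofReal ‖z.1‖) ^ (-γ) * Ψ z.2) with hΦ
  have hΦmeas : Measurable Φ :=
    (measurable_one.indicator hset).mul
      ((ENNReal.continuous_rpow_const.measurable.comp
        (measurable_fst.norm.ennreal_ofReal)).mul (hΨmeas.comp measurable_snd))
  have inner_eq : ∀ x : En, ∫⁻ t : En, Φ (x, t) ∂volume =
      (ENNReal.ofReal ‖x‖) ^ (-γ) * ∫⁻ t in ball (0 : En) ‖x‖, Ψ t ∂volume := by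
    intro x
    have hpt : ∀ t : En, Φ (x, t) =
        (ball (0 : En) ‖x‖).indicator
          (fun t => (ENNReal.ofReal ‖x‖) ^ (-γ) * Ψ t) t := by
      intro t
      by_cases h : ‖t‖ < ‖x‖
      · rw [hΦ]
        simp only [indicator_of_mem (mem_ball_zero_iff.2 h),
          indicator_of_mem (show ((x, t) : En × En) ∈ {z : En × En | ‖z.2‖ < ‖z.1‖} from h),
          one_mul]
      · rw [hΦ]
        simp only [indicator_of_notMem (fun hh => h (mem_ball_zero_iff.1 hh)),
          indicator_of_notMem (show ((x, t) : En × En) ∉ {z : En × En | ‖z.2‖ < ‖z.1‖} from h),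
          zero_mul]
    rw [lintegral_congr hpt, lintegral_indicator measurableSet_ball _,
      lintegral_const_mul _ hΨmeas]
  have outer_eq : ∀ t : En, ∫⁻ x : En, Φ (x, t) ∂volume =
      Ψ t * ∫⁻ x in {x : En | ‖t‖ < ‖x‖}, (ENNReal.ofReal ‖x‖) ^ (-γ) ∂volume := by
    intro t
    have hpt : ∀ x : En, Φ (x, t) =
        ({x : En | ‖t‖ < ‖x‖}).indicator
          (fun x => (ENNReal.ofReal ‖x‖) ^ (-γ) * Ψ t) x := by
      intro x
      by_cases h : ‖t‖ < ‖x‖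
      · rw [hΦ]
        simp only [indicator_of_mem (show x ∈ {x : En | ‖t‖ < ‖x‖} from h),
          indicator_of_mem (show ((x, t) : En × En) ∈ {z : En × En | ‖z.2‖ < ‖z.1‖} from h),
          one_mul]
      · rw [hΦ]
        simp only [indicator_of_notMem (show x ∉ {x : En | ‖t‖ < ‖x‖} from h),
          indicator_of_notMem (show ((x, t) : En × En) ∉ {z : En × En | ‖z.2‖ < ‖z.1‖} from h),
          zero_mul]
    have hmeas2 : Measurable fun x : En => (ENNReal.ofReal ‖x‖) ^ (-γ) :=
      ENNReal.continuous_rpow_const.measurable.comp measurable_norm.ennreal_ofReal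
    rw [lintegral_congr hpt,
      lintegral_indicator (measurableSet_lt measurable_const measurable_norm) _,
      lintegral_mul_const _ hmeas2, mul_comm]
  have bound_t : ∀ᵐ t : En ∂volume,
      Ψ t * ∫⁻ x in {x : En | ‖t‖ < ‖x‖}, (ENNReal.ofReal ‖x‖) ^ (-γ) ∂volume ≤
        CA * F t ^ p := by
    filter_upwards [hae0] with t ht
    have htn : 0 < ‖t‖ := norm_pos_iff.2 ht
    have hsub : {x : En | ‖t‖ < ‖x‖} ⊆ {x : En | ‖t‖ ≤ ‖x‖} := fun x hx => le_of_lt (show ‖t‖ < ‖x‖ from hx)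
    have h0 : ∫⁻ x in {x : En | ‖t‖ < ‖x‖}, (ENNReal.ofReal ‖x‖) ^ (-γ) ∂volume ≤
        ∫⁻ x in {x : En | ‖t‖ ≤ ‖x‖}, (ENNReal.ofReal ‖x‖) ^ (-γ) ∂volume :=
      lintegral_mono_set hsub
    have h1 : ∫⁻ x in {x : En | ‖t‖ < ‖x‖}, (ENNReal.ofReal ‖x‖) ^ (-γ) ∂volume ≤
        CA * ENNReal.ofReal (‖t‖ ^ ((n:ℝ) - γ)) := le_trans h0 (hCA ‖t‖ htn)
    have hw0 : (ENNReal.ofReal ‖t‖) ≠ 0 := (ENNReal.ofReal_pos.2 htn).ne'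
    calc Ψ t * ∫⁻ x in {x : En | ‖t‖ < ‖x‖}, (ENNReal.ofReal ‖x‖) ^ (-γ) ∂volume
        ≤ Ψ t * (CA * ENNReal.ofReal (‖t‖ ^ ((n:ℝ) - γ))) := mul_le_mul_right h1 _
      _ = CA * F t ^ p * ((ENNReal.ofReal ‖t‖) ^ a * (ENNReal.ofReal ‖t‖) ^ (-a)) := by
          rw [hΨ, ← ENNReal.ofReal_rpow_of_pos htn,
            show (n:ℝ) - γ = -a by rw [hγdef]; ring]
          ring
      _ = CA * F t ^ p := by
          rw [← ENNReal.rpow_add _ _ hw0 ofReal_ne_top, add_neg_cancel,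
            ENNReal.rpow_zero, mul_one]
  have swap : ∫⁻ x : En, ∫⁻ t : En, Φ (x, t) ∂volume ∂volume =
      ∫⁻ t : En, ∫⁻ x : En, Φ (x, t) ∂volume ∂volume :=
    lintegral_lintegral_swap hΦmeas.aemeasurable
  calc ∫⁻ x : En, (ENNReal.ofReal ((‖x‖ ^ n)⁻¹) *
        ∫⁻ t in ball (0 : En) ‖x‖, (‖g t‖₊ : ℝ≥0∞) ∂volume) ^ p ∂volume
      ≤ ∫⁻ x : En, CB ^ (p/p') * ((ENNReal.ofReal ‖x‖) ^ (-γ) *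
          ∫⁻ t in ball (0 : En) ‖x‖, Ψ t ∂volume) ∂volume := lintegral_mono step1
    _ = CB ^ (p/p') * ∫⁻ x : En, (ENNReal.ofReal ‖x‖) ^ (-γ) *
          ∫⁻ t in ball (0 : En) ‖x‖, Ψ t ∂volume ∂volume :=
        lintegral_const_mul' _ _ hK1ne
    _ = CB ^ (p/p') * ∫⁻ x : En, ∫⁻ t : En, Φ (x, t) ∂volume ∂volume := by
        rw [lintegral_congr (fun x => (inner_eq x).symm)]
    _ = CB ^ (p/p') * ∫⁻ t : En, ∫⁻ x : En, Φ (x, t) ∂volume ∂volume := by rw [swap]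
    _ = CB ^ (p/p') * ∫⁻ t : En, Ψ t *
          ∫⁻ x in {x : En | ‖t‖ < ‖x‖}, (ENNReal.ofReal ‖x‖) ^ (-γ) ∂volume ∂volume := by
        rw [lintegral_congr (fun t => outer_eq t)]
    _ ≤ CB ^ (p/p') * ∫⁻ t : En, CA * F t ^ p ∂volume :=
        mul_le_mul_right (lintegral_mono_ae bound_t) _
    _ = CB ^ (p/p') * CA * ∫⁻ t : En, (‖g t‖₊ : ℝ≥0∞) ^ p ∂volume := by
        rw [lintegral_const_mul' _ _ hCAne, ← mul_assoc]

lemma hardy_eLpNorm (hn : 0 < n) {p : ℝ} (hp : 1 < p) :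
    ∃ C : ℝ, 0 < C ∧ ∀ g : En → ℝ, AEMeasurable g volume →
      eLpNorm (nHardy n g) (ENNReal.ofReal p) volume ≤
        ENNReal.ofReal C * eLpNorm g (ENNReal.ofReal p) volume := by
  obtain ⟨C0, hC0ne, hC0⟩ := hardy_lintegral hn hp
  have hp0 : 0 < p := one_pos.trans hp
  have hCfin : C0 ^ (1/p) ≠ ∞ := ENNReal.rpow_ne_top_of_nonneg (by positivity) hC0ne
  refine ⟨(C0 ^ (1/p)).toReal + 1, by positivity, ?_⟩
  intro g hg
  have hgg' : g =ᵐ[volume] hg.mk g := hg.ae_eq_mk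
  have hmeas : Measurable (hg.mk g) := hg.measurable_mk
  have h1 : nHardy n g = nHardy n (hg.mk g) := by
    funext x
    show (‖x‖ ^ n)⁻¹ * ∫ t in ball (0 : En) ‖x‖, g t = _
    congr 1
    exact integral_congr_ae (ae_restrict_of_ae hgg')
  rw [h1, eLpNorm_congr_ae hgg']
  set g' := hg.mk g with hg'def
  have hQ0 : (ENNReal.ofReal p) ≠ 0 := by
    simp only [ne_eq, ENNReal.ofReal_eq_zero, not_le]
    linarith
  rw [eLpNorm_eq_lintegral_rpow_enorm_toReal hQ0 ofReal_ne_top,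
    eLpNorm_eq_lintegral_rpow_enorm_toReal hQ0 ofReal_ne_top, ENNReal.toReal_ofReal hp0.le]
  have hpt : ∀ x : En, (‖nHardy n g' x‖₊ : ℝ≥0∞) ^ p ≤
      (ENNReal.ofReal ((‖x‖ ^ n)⁻¹) *
        ∫⁻ t in ball (0 : En) ‖x‖, (‖g' t‖₊ : ℝ≥0∞) ∂volume) ^ p := by
    intro x
    refine ENNReal.rpow_le_rpow ?_ hp0.le
    show (‖(‖x‖ ^ n)⁻¹ * ∫ t in ball (0 : En) ‖x‖, g' t‖₊ : ℝ≥0∞) ≤ _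
    calc (‖(‖x‖ ^ n)⁻¹ * ∫ t in ball (0 : En) ‖x‖, g' t‖₊ : ℝ≥0∞)
        = (‖(‖x‖ ^ n)⁻¹‖₊ : ℝ≥0∞) * (‖∫ t in ball (0 : En) ‖x‖, g' t‖₊ : ℝ≥0∞) := by
          rw [nnnorm_mul, ENNReal.coe_mul]
      _ ≤ ENNReal.ofReal ((‖x‖ ^ n)⁻¹) *
            ∫⁻ t in ball (0 : En) ‖x‖, (‖g' t‖₊ : ℝ≥0∞) ∂volume :=
          mul_le_mul' (le_of_eq (Real.enorm_eq_ofReal (by positivity)))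
            (enorm_integral_le_lintegral_enorm _)
  calc (∫⁻ x : En, (‖nHardy n g' x‖₊ : ℝ≥0∞) ^ p ∂volume) ^ (1/p)
      ≤ (C0 * ∫⁻ t : En, (‖g' t‖₊ : ℝ≥0∞) ^ p ∂volume) ^ (1/p) :=
        ENNReal.rpow_le_rpow ((lintegral_mono hpt).trans (hC0 g' hmeas)) (by positivity)
    _ = C0 ^ (1/p) * (∫⁻ t : En, (‖g' t‖₊ : ℝ≥0∞) ^ p ∂volume) ^ (1/p) :=
        ENNReal.mul_rpow_of_nonneg _ _ (by positivity)
    _ ≤ ENNReal.ofReal ((C0 ^ (1/p)).toReal + 1) *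
          (∫⁻ t : En, (‖g' t‖₊ : ℝ≥0∞) ^ p ∂volume) ^ (1/p) := by
        refine mul_le_mul_left ?_ _
        conv_lhs => rw [← ENNReal.ofReal_toReal hCfin]
        exact ENNReal.ofReal_le_ofReal (by linarith)


lemma eLpNorm_mul_le' {μ : Measure En} {u v : En → ℝ} (hu : AEStronglyMeasurable u μ)
    (hv : AEStronglyMeasurable v μ) {P Q R : ℝ≥0∞} (h : 1 / P = 1 / Q + 1 / R) :
    eLpNorm (fun x => u x * v x) P μ ≤ eLpNorm u Q μ * eLpNorm v R μ := by
  haveI : ENNReal.HolderTriple Q R P := ⟨by simpa [one_div] using h.symm⟩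
  have := eLpNorm_smul_le_mul_eLpNorm (𝕜 := ℝ) (f := v) (φ := u) (p := Q) (q := R) (r := P) hv hu
  exact this

end HardyCommutatorAux

open HardyCommutatorAux in
/-- Theorem 4.1 (unmixed case): for `b ∈ CBMO^{p₂,λ₂}`, the commutator `𝓗_b` is bounded
from the central Morrey space `𝓑^{p₁,λ₁}(ℝⁿ)` to `𝓑^{q,λ}(ℝⁿ)`. -/
theorem hardyComm_centralMorrey_bounded (n : ℕ) (hn : 0 < n) (p₁ p₂ q lam lam₁ lam₂ : ℝ)
    (hp₁ : 1 < p₁) (hq : 1 < q) (hp₂ : p₁ / (p₁ - 1) < p₂)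
    (hpq : 1 / q = 1 / p₁ + 1 / p₂) (hlam_lb : -(1 / q) < lam) (hlam_ub : lam < 0)
    (hlam₂0 : 0 ≤ lam₂) (hlam₂1 : lam₂ < 1 / n) (hsum : lam = lam₁ + lam₂) :
    ∃ C : ℝ, 0 < C ∧ ∀ b : EuclideanSpace ℝ (Fin n) → ℝ, LocallyIntegrable b volume →
      ∀ N₂ : ℝ, 0 ≤ N₂ → CBMOLe n p₂ lam₂ N₂ b →
        ∀ f : EuclideanSpace ℝ (Fin n) → ℝ, Measurable f → ∀ Nf : ℝ, 0 ≤ Nf →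
          MorreyLe n p₁ lam₁ Nf f →
          MorreyLe n q lam (C * N₂ * Nf) (hardyComm n b f) := by
  classical
  have hq0 : 0 < q := one_pos.trans hq
  have hp₁0 : 0 < p₁ := one_pos.trans hp₁
  have hp₂1 : 1 < p₂ := lt_trans ((one_lt_div (by linarith)).2 (by linarith)) hp₂
  have hp₂0 : 0 < p₂ := one_pos.trans hp₂1
  obtain ⟨C₁, hC₁pos, hH₁⟩ := hardy_eLpNorm hn hp₁
  obtain ⟨Cq, hCqpos, hHq⟩ := hardy_eLpNorm hn hq
  refine ⟨C₁ + Cq, by positivity, ?_⟩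
  intro b hb N₂ hN₂ hbC f hf Nf hNf hfM
  intro r hr
  set B : Set (EuclideanSpace ℝ (Fin n)) := ball 0 r with hBdef
  set V : ℝ≥0∞ := volume B with hVdef
  set β : ℝ := ballAvg n b r with hβdef
  have hBmeas : MeasurableSet B := measurableSet_ball
  have hVfin : V ≠ ∞ := measure_ball_lt_top.ne
  have hVpos : V ≠ 0 := (measure_ball_pos _ _ hr).ne'
  have hwpos : 0 < V.toReal := ENNReal.toReal_pos hVpos hVfin
  haveI : IsFiniteMeasure (volume.restrict B) :=
    ⟨by rw [Measure.restrict_apply_univ]; exact measure_ball_lt_top⟩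
  set Q := ENNReal.ofReal q with hQdef
  set P₁ := ENNReal.ofReal p₁ with hP₁def
  set P₂ := ENNReal.ofReal p₂ with hP₂def
  have hQ1 : 1 ≤ Q := by rw [hQdef]; exact ENNReal.one_le_ofReal.2 hq.le
  have hP₁1 : 1 ≤ P₁ := by rw [hP₁def]; exact ENNReal.one_le_ofReal.2 hp₁.le
  have hrecip : 1 / Q = 1 / P₂ + 1 / P₁ := by
    rw [hQdef, hP₁def, hP₂def, one_div, one_div, one_div,
      ← ENNReal.ofReal_inv_of_pos hq0, ← ENNReal.ofReal_inv_of_pos hp₁0,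
      ← ENNReal.ofReal_inv_of_pos hp₂0,
      ← ENNReal.ofReal_add (by positivity) (by positivity)]
    congr 1
    rw [inv_eq_one_div, inv_eq_one_div, inv_eq_one_div, hpq]
    ring
  have hind1 : ∀ px : ℝ, 0 < px →
      eLpNorm (B.indicator (1 : EuclideanSpace ℝ (Fin n) → ℝ)) (ENNReal.ofReal px) volume =
        V ^ (1 / px) := by
    intro px hpx
    rw [show (1 : EuclideanSpace ℝ (Fin n) → ℝ) = fun _ => (1 : ℝ) from rfl,
      eLpNorm_indicator_const hBmeas
        (by simp only [ne_eq, ENNReal.ofReal_eq_zero, not_le]; linarith) ofReal_ne_top,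
      ENNReal.toReal_ofReal hpx.le]
    simp
    rfl
  have hbC_r := hbC r hr
  have hfM_r := hfM r hr
  simp only [indNorm] at hbC_r hfM_r
  rw [← hβdef] at hbC_r
  rw [← hBdef, ← hVdef] at hbC_r hfM_r
  rw [← hP₂def, hind1 p₂ hp₂0] at hbC_r
  rw [← hP₁def, hind1 p₁ hp₁0] at hfM_r
  set M₂ : ℝ≥0∞ := ENNReal.ofReal (V.toReal ^ lam₂ * N₂) * V ^ (1 / p₂) with hM₂def
  set M₁ : ℝ≥0∞ := ENNReal.ofReal (V.toReal ^ lam₁ * Nf) * V ^ (1 / p₁) with hM₁def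
  have hM₂fin : M₂ ≠ ∞ :=
    ENNReal.mul_ne_top ofReal_ne_top (ENNReal.rpow_ne_top_of_nonneg (by positivity) hVfin)
  have hM₁fin : M₁ ≠ ∞ :=
    ENNReal.mul_ne_top ofReal_ne_top (ENNReal.rpow_ne_top_of_nonneg (by positivity) hVfin)
  -- measurability and integrability facts
  have hfSM : AEStronglyMeasurable f volume := hf.aestronglyMeasurable
  have hbSM : AEStronglyMeasurable b volume := hb.aestronglyMeasurable
  have hbβSM : AEStronglyMeasurable (fun x => b x - β) volume :=
    hbSM.sub aestronglyMeasurable_const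
  have hfin_f : eLpNorm (B.indicator f) P₁ volume < ∞ :=
    lt_of_le_of_lt hfM_r hM₁fin.lt_top
  have hfin_b : eLpNorm (B.indicator fun x => b x - β) P₂ volume < ∞ :=
    lt_of_le_of_lt hbC_r hM₂fin.lt_top
  have hf_mem : MemLp f P₁ (volume.restrict B) :=
    ⟨hfSM.restrict, by rw [← eLpNorm_indicator_eq_eLpNorm_restrict hBmeas]; exact hfin_f⟩
  have hf_int : IntegrableOn f B volume := hf_mem.integrable hP₁1
  have hg0SM : AEStronglyMeasurable (fun y => (β - b y) * f y) volume :=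
    (aestronglyMeasurable_const.sub hbSM).mul hfSM
  have hβb_eq : eLpNorm (B.indicator fun y => β - b y) P₂ volume =
      eLpNorm (B.indicator fun y => b y - β) P₂ volume := by
    rw [show (B.indicator fun y => β - b y) = -(B.indicator fun y => b y - β) from
      funext fun y => by
        by_cases hy : y ∈ B
        · simp only [Pi.neg_apply, indicator_of_mem hy]; ring
        · simp only [Pi.neg_apply, indicator_of_notMem hy, neg_zero]]
    exact eLpNorm_neg _ _ _
  have hprod_eLp : eLpNorm (fun y => (β - b y) * f y) Q (volume.restrict B) ≤
      eLpNorm (fun y => β - b y) P₂ (volume.restrict B) *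
        eLpNorm f P₁ (volume.restrict B) :=
    eLpNorm_mul_le' ((aestronglyMeasurable_const.sub hbSM).restrict) hfSM.restrict hrecip
  have hg0_mem : MemLp (fun y => (β - b y) * f y) Q (volume.restrict B) := by
    refine ⟨hg0SM.restrict, lt_of_le_of_lt hprod_eLp ?_⟩
    rw [← eLpNorm_indicator_eq_eLpNorm_restrict hBmeas,
      ← eLpNorm_indicator_eq_eLpNorm_restrict hBmeas, hβb_eq]
    exact ENNReal.mul_lt_top hfin_b hfin_f
  have hg0_int : IntegrableOn (fun y => (β - b y) * f y) B volume := hg0_mem.integrable hQ1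
  set f' : EuclideanSpace ℝ (Fin n) → ℝ := B.indicator f with hf'def
  set g' : EuclideanSpace ℝ (Fin n) → ℝ := B.indicator (fun y => (β - b y) * f y) with hg'def
  have hf'_int : Integrable f' volume := hf_int.integrable_indicator hBmeas
  have hg'_int : Integrable g' volume := hg0_int.integrable_indicator hBmeas
  have hf'_aem : AEMeasurable f' volume := (hf.indicator hBmeas).aemeasurable
  have hg'_aem : AEMeasurable g' volume := hg'_int.aemeasurable
  -- the pointwise decomposition
  have key : B.indicator (hardyComm n b f) =
      (fun x => (B.indicator (fun y => b y - β) x) * nHardy n f' x) +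
        B.indicator (fun x => nHardy n g' x) := by
    funext x
    by_cases hx : x ∈ B
    · have hxr : ‖x‖ < r := mem_ball_zero_iff.1 hx
      have hsub : ball (0 : EuclideanSpace ℝ (Fin n)) ‖x‖ ⊆ B := by
        rw [hBdef]; exact ball_subset_ball hxr.le
      have hf_x : IntegrableOn f (ball (0 : EuclideanSpace ℝ (Fin n)) ‖x‖) volume :=
        hf_int.mono_set hsub
      have hg0_x : IntegrableOn (fun y => (β - b y) * f y)
          (ball (0 : EuclideanSpace ℝ (Fin n)) ‖x‖) volume := hg0_int.mono_set hsub
      have hβf_x : IntegrableOn (fun y => β * f y)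
          (ball (0 : EuclideanSpace ℝ (Fin n)) ‖x‖) volume := hf_x.const_mul β
      have hbf_x : IntegrableOn (fun y => b y * f y)
          (ball (0 : EuclideanSpace ℝ (Fin n)) ‖x‖) volume := by
        have h := hβf_x.sub hg0_x
        refine h.congr (Filter.Eventually.of_forall fun y => ?_)
        simp only [Pi.sub_apply]
        ring
      have e1 : nHardy n f' x = nHardy n f x := by
        show (‖x‖ ^ n)⁻¹ * _ = (‖x‖ ^ n)⁻¹ * _
        congr 1
        exact setIntegral_congr_fun measurableSet_ball fun t ht =>
          indicator_of_mem (hsub ht) f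
      have e2 : nHardy n g' x =
          β * nHardy n f x - nHardy n (fun y => b y * f y) x := by
        have i1 : ∫ t in ball (0 : EuclideanSpace ℝ (Fin n)) ‖x‖, g' t =
            ∫ t in ball (0 : EuclideanSpace ℝ (Fin n)) ‖x‖, (β - b t) * f t :=
          setIntegral_congr_fun measurableSet_ball fun t ht =>
            indicator_of_mem (hsub ht) _
        have i2 : ∫ t in ball (0 : EuclideanSpace ℝ (Fin n)) ‖x‖, (β - b t) * f t =
            β * (∫ t in ball (0 : EuclideanSpace ℝ (Fin n)) ‖x‖, f t) -
              ∫ t in ball (0 : EuclideanSpace ℝ (Fin n)) ‖x‖, b t * f t := by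
          have heq : (fun t => (β - b t) * f t) =
              fun t => β * f t - b t * f t := funext fun t => by ring
          rw [heq, integral_sub hβf_x hbf_x, integral_const_mul β _]
        show (‖x‖ ^ n)⁻¹ * _ = _
        rw [i1, i2]
        show _ = β * ((‖x‖ ^ n)⁻¹ * _) - (‖x‖ ^ n)⁻¹ * _
        ring
      rw [indicator_of_mem hx, Pi.add_apply, indicator_of_mem hx, indicator_of_mem hx,
        e1, e2]
      show hardyComm n b f x = _
      rw [hardyComm]
      ring
    · rw [indicator_of_notMem hx, Pi.add_apply, indicator_of_notMem hx,
        indicator_of_notMem hx, zero_mul, add_zero]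
  -- measurability of the two pieces
  have hΦ₁SM : AEStronglyMeasurable
      (fun x => (B.indicator (fun y => b y - β) x) * nHardy n f' x) volume :=
    (hbβSM.indicator hBmeas).mul (measurable_nHardy f' hf'_int).aestronglyMeasurable
  have hΦ₂SM : AEStronglyMeasurable (B.indicator fun x => nHardy n g' x) volume :=
    ((measurable_nHardy g' hg'_int).aestronglyMeasurable).indicator hBmeas
  -- the two main bounds
  have bound1 : eLpNorm (fun x => (B.indicator (fun y => b y - β) x) * nHardy n f' x)
      Q volume ≤ M₂ * (ENNReal.ofReal C₁ * M₁) := by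
    refine le_trans (eLpNorm_mul_le' (hbβSM.indicator hBmeas)
      (measurable_nHardy f' hf'_int).aestronglyMeasurable hrecip) ?_
    refine mul_le_mul' hbC_r ?_
    calc eLpNorm (nHardy n f') P₁ volume
        ≤ ENNReal.ofReal C₁ * eLpNorm f' P₁ volume := hH₁ f' hf'_aem
      _ ≤ ENNReal.ofReal C₁ * M₁ := mul_le_mul_right hfM_r _
  have bound2 : eLpNorm (B.indicator fun x => nHardy n g' x) Q volume ≤
      ENNReal.ofReal Cq * (M₂ * M₁) := by
    calc eLpNorm (B.indicator fun x => nHardy n g' x) Q volume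
        ≤ eLpNorm (fun x => nHardy n g' x) Q volume := eLpNorm_indicator_le _
      _ ≤ ENNReal.ofReal Cq * eLpNorm g' Q volume := hHq g' hg'_aem
      _ ≤ ENNReal.ofReal Cq * (M₂ * M₁) := by
          refine mul_le_mul_right ?_ _
          have hsplit : g' = fun x =>
              (B.indicator (fun y => β - b y) x) * (B.indicator f x) := by
            funext x
            by_cases hx : x ∈ B
            · rw [hg'def]
              simp only [indicator_of_mem hx]
            · rw [hg'def]
              simp only [indicator_of_notMem hx, mul_zero]
          rw [hsplit]
          refine le_trans (eLpNorm_mul_le'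
            ((show AEStronglyMeasurable (fun y => β - b y) volume from
              aestronglyMeasurable_const.sub hbSM).indicator hBmeas)
            (hfSM.indicator hBmeas) hrecip) ?_
          rw [hβb_eq]
          exact mul_le_mul' hbC_r hfM_r
  -- put everything together
  show eLpNorm (B.indicator (hardyComm n b f)) Q volume ≤ _
  calc eLpNorm (B.indicator (hardyComm n b f)) Q volume
      = eLpNorm ((fun x => (B.indicator (fun y => b y - β) x) * nHardy n f' x) +
          B.indicator (fun x => nHardy n g' x)) Q volume := by rw [key]
    _ ≤ eLpNorm (fun x => (B.indicator (fun y => b y - β) x) * nHardy n f' x) Q volume +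
          eLpNorm (B.indicator fun x => nHardy n g' x) Q volume :=
        eLpNorm_add_le hΦ₁SM hΦ₂SM hQ1
    _ ≤ M₂ * (ENNReal.ofReal C₁ * M₁) + ENNReal.ofReal Cq * (M₂ * M₁) :=
        add_le_add bound1 bound2
    _ = (ENNReal.ofReal C₁ + ENNReal.ofReal Cq) * (M₂ * M₁) := by ring
    _ = ENNReal.ofReal (V.toReal ^ lam * ((C₁ + Cq) * N₂ * Nf)) * V ^ (1 / q) := by
        rw [hM₂def, hM₁def, ← ENNReal.ofReal_add hC₁pos.le hCqpos.le]
        rw [show ENNReal.ofReal (C₁ + Cq) *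
            (ENNReal.ofReal (V.toReal ^ lam₂ * N₂) * V ^ (1 / p₂) *
              (ENNReal.ofReal (V.toReal ^ lam₁ * Nf) * V ^ (1 / p₁))) =
            (ENNReal.ofReal (C₁ + Cq) * ENNReal.ofReal (V.toReal ^ lam₂ * N₂) *
              ENNReal.ofReal (V.toReal ^ lam₁ * Nf)) * (V ^ (1 / p₂) * V ^ (1 / p₁))
          from by ring]
        rw [← ENNReal.rpow_add _ _ hVpos hVfin,
          ← ENNReal.ofReal_mul (by positivity), ← ENNReal.ofReal_mul (by positivity)]
        congr 2
        · rw [hsum, Real.rpow_add hwpos]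
          ring
        · rw [hpq]
          ring
    _ = ENNReal.ofReal (V.toReal ^ lam * ((C₁ + Cq) * N₂ * Nf)) *
          eLpNorm (B.indicator (1 : EuclideanSpace ℝ (Fin n) → ℝ)) Q volume := by
        rw [hQdef, hind1 q hq0]
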